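/- arXiv:2511.22024 — 2 statements merged into one kernel-verified Lean document; each statement's English description precedes it below -/
import Mathlib

section
/- For a finite state space, the stochastic contrastive objective admits the integral representation J(θ) = ∫_0^1 E_{s∼ρ_β(·;θ)}[ℓ(s)] dβ. -/
/-!
The free energy `A(β) = -T log Z_β` is differentiable in `β`, and differentiating `log Z_β`
brings down the factor `-ℓ(s)/T` inside the sum, so `A'(β) = Σ_s ρ_β(s) ℓ(s)` is the Gibbs
expectation of the loss. This derivative is continuous, and the fundamental theorem of calculus
on `[0, 1]` gives `A(1) - A(0) = ∫_0^1 E_{ρ_β}[ℓ] dβ`.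
-/

open Real

namespace Gibbs

variable {S : Type*} [Fintype S]

noncomputable def partitionFunction (H : S → ℝ) (T : ℝ) : ℝ :=
  ∑ s, exp (-(H s / T))

noncomputable def freeEnergy (H : S → ℝ) (T : ℝ) : ℝ :=
  -T * log (partitionFunction H T)

noncomputable def weight (H : S → ℝ) (T : ℝ) (s : S) : ℝ :=
  exp (-(H s / T)) / partitionFunction H T

theorem partitionFunction_pos [Nonempty S] (H : S → ℝ) (T : ℝ) :
    0 < partitionFunction H T :=
  Finset.sum_pos (fun _ _ => exp_pos _) Finset.univ_nonempty

theorem hasDerivAt_partitionFunction {H : ℝ → S → ℝ} {H' : S → ℝ} {β : ℝ} (T : ℝ)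
    (hH : ∀ s, HasDerivAt (H · s) (H' s) β) :
    HasDerivAt (fun b => partitionFunction (H b) T)
      (∑ s, -(H' s / T) * exp (-(H β s / T))) β := by
  unfold partitionFunction
  refine HasDerivAt.fun_sum fun s _ => ?_
  simpa only [mul_comm, neg_div] using (((hH s).div_const T).fun_neg).exp

theorem hasDerivAt_freeEnergy [Nonempty S] {H : ℝ → S → ℝ} {H' : S → ℝ} {β T : ℝ}
    (hT : T ≠ 0) (hH : ∀ s, HasDerivAt (H · s) (H' s) β) :
    HasDerivAt (fun b => freeEnergy (H b) T) (∑ s, weight (H β) T s * H' s) β := by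
  have hlog := ((hasDerivAt_partitionFunction T hH).log
    (partitionFunction_pos (H β) T).ne').const_mul (-T)
  refine hlog.congr_deriv ?_
  rw [mul_div_assoc', Finset.mul_sum, Finset.sum_div]
  refine Finset.sum_congr rfl fun s _ => ?_
  unfold weight
  field_simp

theorem continuous_weight [Nonempty S] {H : ℝ → S → ℝ} (T : ℝ) (hH : ∀ s, Continuous (H · s))
    (s : S) : Continuous fun b => weight (H b) T s := by
  have hZ : Continuous fun b => partitionFunction (H b) T :=
    continuous_finsetSum _ fun s _ => ((hH s).div_const T).neg.rexp
  exact ((hH s).div_const T).neg.rexp.div hZ fun b => (partitionFunction_pos (H b) T).ne'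

theorem freeEnergy_sub_eq_integral [Nonempty S] (E ℓ : S → ℝ) {T : ℝ} (hT : T ≠ 0) (a b : ℝ) :
    freeEnergy (fun s => E s + b * ℓ s) T - freeEnergy (fun s => E s + a * ℓ s) T
      = ∫ β in a..b, ∑ s, weight (fun s => E s + β * ℓ s) T s * ℓ s := by
  have hH : ∀ s, Continuous fun β : ℝ => E s + β * ℓ s := fun s => by fun_prop
  have hderiv (β : ℝ) := hasDerivAt_freeEnergy (H := fun β s => E s + β * ℓ s) (β := β) hT
    fun s => ((hasDerivAt_id β).mul_const (ℓ s)).const_add (E s) |>.congr_deriv (one_mul _)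
  have hcont : Continuous fun β => ∑ s, weight (fun s => E s + β * ℓ s) T s * ℓ s :=
    continuous_finsetSum _ fun s _ => (continuous_weight T hH s).mul continuous_const
  exact (intervalIntegral.integral_eq_sub_of_hasDerivAt (fun β _ => hderiv β)
    (hcont.intervalIntegrable a b)).symm

end Gibbs

/-- Integral representation of the stochastic contrastive objective:
`J(θ) = ∫_0^1 E_{s∼ρ_β}[ℓ(s)] dβ`. -/
theorem contrastive_objective_eq_integral_expected_loss
    {S : Type*} [Fintype S] [Nonempty S]
    (E : S → ℝ) (ℓ : S → ℝ) (T : ℝ) (hT : 0 < T)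
    (Z : ℝ → ℝ) (hZ : ∀ β, Z β = ∑ s, Real.exp (-((E s + β * ℓ s) / T)))
    (ρ : ℝ → S → ℝ)
    (hρ : ∀ β s, ρ β s = Real.exp (-((E s + β * ℓ s) / T)) / Z β)
    (A : ℝ → ℝ) (hA : ∀ β, A β = -T * Real.log (Z β))
    (J : ℝ) (hJ : J = A 1 - A 0) :
    J = ∫ β in (0:ℝ)..1, ∑ s, ρ β s * ℓ s := by
  have hZ' : Z = fun β => Gibbs.partitionFunction (fun s => E s + β * ℓ s) T := funext hZ
  have hρ' : ρ = fun β => Gibbs.weight (fun s => E s + β * ℓ s) T := by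
    funext β s
    rw [hρ, hZ']
    rfl
  have hA' : A = fun β => Gibbs.freeEnergy (fun s => E s + β * ℓ s) T := by
    funext β
    rw [hA, hZ']
    rfl
  rw [hJ, hA', hρ']
  exact Gibbs.freeEnergy_sub_eq_integral E ℓ hT.ne' 0 1
end

section
/- For a finite state space with one-dimensional parameter θ, the derivative of the stochastic contrastive objective equals an integrated covariance: J'(θ) = -(1/T)·∫_0^1 Cov_{s∼ρ_β(·;θ)}[ℓ(s), ∂_θ E(θ,s)] dβ. -/
/-!
Write `A(θ, β)` as the free energy `-T log Σ exp(-H/T)` of the energy `H = E(θ, ·) + β ℓ`.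
Its θ-derivative is the Gibbs mean of `∂_θ E`, so `J'(θ)` is the difference of that mean at
`β = 1` and `β = 0`. Along the tilt `β ↦ E + β ℓ` the Gibbs mean of a fixed observable `g` has
derivative `-(1/T) Cov[ℓ, g]`, and the fundamental theorem of calculus turns the difference into
the integrated covariance.
-/

open Real Finset

section Gibbs

variable {S : Type*} [Fintype S]

noncomputable def gibbsSum (T : ℝ) (H g : S → ℝ) : ℝ := ∑ s, exp (-(H s / T)) * g s

noncomputable def gibbsMean (T : ℝ) (H g : S → ℝ) : ℝ := gibbsSum T H g / gibbsSum T H 1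

noncomputable def gibbsCov (T : ℝ) (H f g : S → ℝ) : ℝ :=
  gibbsMean T H (f * g) - gibbsMean T H f * gibbsMean T H g

noncomputable def freeEnergy (T : ℝ) (H : S → ℝ) : ℝ := -T * log (gibbsSum T H 1)

theorem gibbsSum_one_pos [Nonempty S] (T : ℝ) (H : S → ℝ) : 0 < gibbsSum T H 1 := by
  simpa [gibbsSum] using sum_pos (fun s _ => exp_pos (-(H s / T))) univ_nonempty

theorem hasDerivAt_gibbsSum {H : ℝ → S → ℝ} {H' : S → ℝ} {x : ℝ}
    (hH : ∀ s, HasDerivAt (H · s) (H' s) x) (T : ℝ) (g : S → ℝ) :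
    HasDerivAt (fun y => gibbsSum T (H y) g) (-(1 / T) * gibbsSum T (H x) (H' * g)) x := by
  have := HasDerivAt.fun_sum (u := univ) fun s _ =>
    ((((hH s).div_const T).neg).exp).mul_const (g s)
  refine this.congr_deriv ?_
  simp only [gibbsSum, mul_sum, Pi.mul_apply, Pi.neg_apply]
  exact sum_congr rfl fun s _ => by ring

theorem hasDerivAt_freeEnergy [Nonempty S] {H : ℝ → S → ℝ} {H' : S → ℝ} {x T : ℝ}
    (hH : ∀ s, HasDerivAt (H · s) (H' s) x) (hT : T ≠ 0) :
    HasDerivAt (fun y => freeEnergy T (H y)) (gibbsMean T (H x) H') x := by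
  refine (((hasDerivAt_gibbsSum hH T 1).log (gibbsSum_one_pos T (H x)).ne').const_mul
    (-T)).congr_deriv ?_
  rw [gibbsMean, mul_one]
  field_simp

theorem hasDerivAt_gibbsMean_tilt [Nonempty S] (T : ℝ) (H ℓ g : S → ℝ) (β : ℝ) :
    HasDerivAt (fun β => gibbsMean T (fun s => H s + β * ℓ s) g)
      (-(1 / T) * gibbsCov T (fun s => H s + β * ℓ s) ℓ g) β := by
  have hH : ∀ s, HasDerivAt (fun β => H s + β * ℓ s) (ℓ s) β := fun s =>
    (hasDerivAt_mul_const (ℓ s)).const_add (H s)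
  refine ((hasDerivAt_gibbsSum hH T g).div (hasDerivAt_gibbsSum hH T 1)
    (gibbsSum_one_pos T _).ne').congr_deriv ?_
  have := (gibbsSum_one_pos T (fun s => H s + β * ℓ s)).ne'
  rw [mul_one, gibbsCov, gibbsMean, gibbsMean, gibbsMean]
  field_simp
  ring

theorem continuous_gibbsCov_tilt [Nonempty S] (T : ℝ) (H ℓ g : S → ℝ) :
    Continuous fun β => gibbsCov T (fun s => H s + β * ℓ s) ℓ g := by
  have hmean (u : S → ℝ) : Continuous fun β => gibbsMean T (fun s => H s + β * ℓ s) u :=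
    continuous_iff_continuousAt.2 fun β => (hasDerivAt_gibbsMean_tilt T H ℓ u β).continuousAt
  exact (hmean _).sub ((hmean _).mul (hmean _))

theorem integral_gibbsCov_tilt [Nonempty S] (T : ℝ) (H ℓ g : S → ℝ) (a b : ℝ) :
    -(1 / T) * ∫ β in a..b, gibbsCov T (fun s => H s + β * ℓ s) ℓ g =
      gibbsMean T (fun s => H s + b * ℓ s) g - gibbsMean T (fun s => H s + a * ℓ s) g := by
  rw [← intervalIntegral.integral_const_mul]
  exact intervalIntegral.integral_eq_sub_of_hasDerivAt
    (fun β _ => hasDerivAt_gibbsMean_tilt T H ℓ g β)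
    ((continuous_const.mul (continuous_gibbsCov_tilt T H ℓ g)).intervalIntegrable a b)

end Gibbs

theorem deriv_contrastive_objective_eq_integrated_covariance_general
    {S : Type*} [Fintype S] [Nonempty S]
    (E : ℝ → S → ℝ) (ℓ : S → ℝ) (T : ℝ) (hT : 0 < T)
    (E' : ℝ → S → ℝ)
    (hE : ∀ θ s, HasDerivAt (fun θ' => E θ' s) (E' θ s) θ)
    (Z : ℝ → ℝ → ℝ)
    (hZ : ∀ β θ, Z β θ = ∑ s, Real.exp (-((E θ s + β * ℓ s) / T)))
    (ρ : ℝ → ℝ → S → ℝ)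
    (hρ : ∀ β θ s, ρ β θ s = Real.exp (-((E θ s + β * ℓ s) / T)) / Z β θ)
    (A : ℝ → ℝ → ℝ) (hA : ∀ θ β, A θ β = -T * Real.log (Z β θ))
    (J : ℝ → ℝ) (hJ : ∀ θ, J θ = A θ 1 - A θ 0)
    (θ : ℝ) :
    HasDerivAt J
      (-(1 / T) * ∫ β in (0:ℝ)..1,
        ((∑ s, ρ β θ s * (ℓ s * E' θ s)) -
          (∑ s, ρ β θ s * ℓ s) * (∑ s, ρ β θ s * E' θ s))) θ := by
  set H : ℝ → ℝ → S → ℝ := fun β θ s => E θ s + β * ℓ s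
  have hZH : ∀ β θ, Z β θ = gibbsSum T (H β θ) 1 := fun β θ => by simp [hZ, gibbsSum, H]
  have hAH : ∀ θ β, A θ β = freeEnergy T (H β θ) := fun θ β => by rw [hA, hZH, freeEnergy]
  have hρ_mean : ∀ β g, ∑ s, ρ β θ s * g s = gibbsMean T (H β θ) g := fun β g => by
    simp only [hρ, hZH, gibbsMean, gibbsSum, sum_div, div_mul_eq_mul_div, H]
  have hH : ∀ β s, HasDerivAt (fun θ' => H β θ' s) (E' θ s) θ := fun β s =>
    (hE θ s).add_const (β * ℓ s)
  have hcov : ∀ β, (∑ s, ρ β θ s * (ℓ s * E' θ s)) -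
      (∑ s, ρ β θ s * ℓ s) * (∑ s, ρ β θ s * E' θ s) = gibbsCov T (H β θ) ℓ (E' θ) :=
    fun β => by rw [hρ_mean, hρ_mean, hρ_mean (g := E' θ)]; rfl
  simp only [hcov, H, integral_gibbsCov_tilt]
  rw [show J = fun θ => freeEnergy T (H 1 θ) - freeEnergy T (H 0 θ) from
    funext fun θ => by rw [hJ, hAH, hAH]]
  exact (hasDerivAt_freeEnergy (hH 1) hT.ne').sub (hasDerivAt_freeEnergy (hH 0) hT.ne')

/-- For a one-dimensional parameter `θ`, the derivative of the
stochastic contrastive objective equals an integrated covariance: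
`J'(θ) = -(1/T)·∫_0^1 Cov_{ρ_β(·;θ)}[ℓ, ∂_θ E] dβ`. -/
theorem deriv_contrastive_objective_eq_integrated_covariance
    {S : Type*} [Fintype S] [Nonempty S]
    (E : ℝ → S → ℝ) (ℓ : S → ℝ) (T : ℝ) (hT : 0 < T)
    (E' : ℝ → S → ℝ)
    (hE : ∀ θ s, HasDerivAt (fun θ' => E θ' s) (E' θ s) θ)
    (hE' : ∀ s, Continuous (fun θ => E' θ s))
    (Z : ℝ → ℝ → ℝ)
    (hZ : ∀ β θ, Z β θ = ∑ s, Real.exp (-((E θ s + β * ℓ s) / T)))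
    (ρ : ℝ → ℝ → S → ℝ)
    (hρ : ∀ β θ s, ρ β θ s = Real.exp (-((E θ s + β * ℓ s) / T)) / Z β θ)
    (A : ℝ → ℝ → ℝ) (hA : ∀ θ β, A θ β = -T * Real.log (Z β θ))
    (J : ℝ → ℝ) (hJ : ∀ θ, J θ = A θ 1 - A θ 0)
    (θ : ℝ) :
    HasDerivAt J
      (-(1 / T) * ∫ β in (0:ℝ)..1,
        ((∑ s, ρ β θ s * (ℓ s * E' θ s)) -
          (∑ s, ρ β θ s * ℓ s) * (∑ s, ρ β θ s * E' θ s))) θ :=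
  deriv_contrastive_objective_eq_integrated_covariance_general E ℓ T hT E' hE Z hZ ρ hρ A hA J hJ θ
end
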